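/- Let d ≥ 1 and let μ be a probability measure on ℝ^d whose support K is compact. For t ∈ (0,1), let tμ be the pushforward of μ under y ↦ t·y, and define f_t(x) := dist²_{tμ}(x, 1-t) - (1-t)‖x‖². Then for every x ∈ ℝ^d, lim_{t → 1⁻} f_t(x) = dist_K(x)², where dist_K(x) := inf_{y ∈ K} ‖x - y‖. -/

import Mathlib

open MeasureTheory Real Set Filter

/-- The topological support of a measure. -/
def mSupport {α : Type*} [TopologicalSpace α] [MeasurableSpace α]
    (μ : Measure α) : Set α :=
  {x | ∀ U ∈ nhds x, 0 < μ U}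

/-- The smoothed squared-distance
`dist²_μ(x, σ) = -2σ² log(∫ exp(-‖y - x‖²/(2σ²)) dμ(y))`. -/
noncomputable def smDist2 {d : ℕ} (μ : Measure (EuclideanSpace ℝ (Fin d)))
    (x : EuclideanSpace ℝ (Fin d)) (σ : ℝ) : ℝ :=
  -2 * σ ^ 2 * Real.log (∫ y, Real.exp (-‖y - x‖ ^ 2 / (2 * σ ^ 2)) ∂μ)

/-- The homotopy objective `f_t(x) = dist²_{tμ}(x, 1-t) - (1-t)‖x‖²`, where
`tμ` is the pushforward of `μ` under `y ↦ t • y`. -/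
noncomputable def homotopyObj {d : ℕ} (μ : Measure (EuclideanSpace ℝ (Fin d)))
    (t : ℝ) (x : EuclideanSpace ℝ (Fin d)) : ℝ :=
  smDist2 (Measure.map (fun y => t • y) μ) x (1 - t) - (1 - t) * ‖x‖ ^ 2

lemma compl_mSupport_null {d : ℕ} (μ : Measure (EuclideanSpace ℝ (Fin d))) :
    μ (mSupport μ)ᶜ = 0 := by
  have hsub : (mSupport μ)ᶜ ⊆ ⋃₀ {U | IsOpen U ∧ μ U = 0} := by
    intro z hz
    simp only [mSupport, mem_compl_iff, mem_setOf_eq, not_forall] at hz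
    obtain ⟨U, hU, hU0⟩ := hz
    obtain ⟨V, hVU, hVopen, hzV⟩ := mem_nhds_iff.1 hU
    refine ⟨V, ⟨hVopen, ?_⟩, hzV⟩
    have : μ U = 0 := le_antisymm (not_lt.1 hU0) zero_le
    exact measure_mono_null hVU this
  obtain ⟨T, hTc, hTsub, hTeq⟩ :=
    TopologicalSpace.isOpen_sUnion_countable {U | IsOpen U ∧ μ U = 0} (fun s hs => hs.1)
  refine measure_mono_null hsub ?_
  rw [← hTeq]
  exact (measure_sUnion_null_iff hTc).2 (fun s hs => (hTsub hs).2)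


set_option maxHeartbeats 1000000 in
/-- For a probability measure `μ` on `ℝ^d` with compact support `K`, the homotopy
objective converges pointwise, as `t → 1⁻`, to the squared distance to `K`:
`lim_{t → 1⁻} f_t(x) = dist_K(x)²` where `dist_K(x) = inf_{y ∈ K} ‖x - y‖`. -/
theorem stmt12 {d : ℕ} (hd : 1 ≤ d) (μ : Measure (EuclideanSpace ℝ (Fin d)))
    [IsProbabilityMeasure μ] (hK : IsCompact (mSupport μ)) :
    ∀ x : EuclideanSpace ℝ (Fin d),
      Tendsto (fun t => homotopyObj μ t x) (nhdsWithin 1 (Iio (1 : ℝ)))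
        (nhds ((Metric.infDist x (mSupport μ)) ^ 2)) := by
  intro x
  set K := mSupport μ with hKdef
  have hμKc : μ Kᶜ = 0 := compl_mSupport_null μ
  have hKne : K.Nonempty := by
    rcases eq_empty_or_nonempty K with h | h
    · exfalso
      rw [h, compl_empty] at hμKc
      simp [measure_univ] at hμKc
    · exact h
  have ae_K : ∀ᵐ y ∂μ, y ∈ K := by
    rw [ae_iff]
    simpa [compl_def] using hμKc
  obtain ⟨r, hrK⟩ := hK.isBounded.subset_closedBall 0
  set R : ℝ := max r 0 with hRdef
  have hR0 : 0 ≤ R := le_max_right _ _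
  have hRK : ∀ y ∈ K, ‖y‖ ≤ R := by
    intro y hy
    have := hrK hy
    rw [Metric.mem_closedBall, dist_zero_right] at this
    exact this.trans (le_max_left _ _)
  set D : ℝ := Metric.infDist x K with hDdef
  have hD0 : 0 ≤ D := Metric.infDist_nonneg
  obtain ⟨y₀, hy₀K, hy₀⟩ := hK.exists_infDist_eq_dist hKne x
  have hy₀n : ‖y₀ - x‖ = D := by rw [hDdef, hy₀, dist_eq_norm, norm_sub_rev]
  -- integrand and its properties
  have hint : ∀ t : ℝ, Integrable
      (fun y : EuclideanSpace ℝ (Fin d) =>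
        Real.exp (-‖t • y - x‖ ^ 2 / (2 * (1 - t) ^ 2))) μ := by
    intro t
    apply Integrable.mono' (integrable_const (1 : ℝ))
      (Continuous.aestronglyMeasurable (by fun_prop))
    filter_upwards with y
    rw [Real.norm_eq_abs, abs_of_pos (Real.exp_pos _)]
    rw [Real.exp_le_one_iff]
    apply div_nonpos_of_nonpos_of_nonneg
    · simp [sq_nonneg]
    · positivity
  have hFdef : ∀ t : ℝ, homotopyObj μ t x =
      -2 * (1 - t) ^ 2 *
        Real.log (∫ y, Real.exp (-‖t • y - x‖ ^ 2 / (2 * (1 - t) ^ 2)) ∂μ)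
      - (1 - t) * ‖x‖ ^ 2 := by
    intro t
    unfold homotopyObj smDist2
    rw [integral_map ((continuous_const_smul t).measurable.aemeasurable)
      (Continuous.aestronglyMeasurable (by fun_prop))]
  have hFpos : ∀ t : ℝ,
      0 < ∫ y, Real.exp (-‖t • y - x‖ ^ 2 / (2 * (1 - t) ^ 2)) ∂μ := by
    intro t
    rw [integral_pos_iff_support_of_nonneg (fun y => (Real.exp_pos _).le) (hint t)]
    have hsupp : (Function.support fun y : EuclideanSpace ℝ (Fin d) =>
        Real.exp (-‖t • y - x‖ ^ 2 / (2 * (1 - t) ^ 2))) = univ := by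
      ext y
      simp [Function.mem_support, (Real.exp_pos _).ne']
    rw [hsupp]
    simp
  -- lower bound on homotopyObj
  have hlow : ∀ t : ℝ, t < 1 →
      max (D - (1 - t) * R) 0 ^ 2 - (1 - t) * ‖x‖ ^ 2 ≤ homotopyObj μ t x := by
    intro t ht
    have hσ : 0 < 1 - t := by linarith
    set σ : ℝ := 1 - t with hσdef
    set L : ℝ := max (D - σ * R) 0 with hLdef
    have hL0 : 0 ≤ L := le_max_right _ _
    have hFle : (∫ y, Real.exp (-‖t • y - x‖ ^ 2 / (2 * σ ^ 2)) ∂μ)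
        ≤ Real.exp (-L ^ 2 / (2 * σ ^ 2)) := by
      have h1 : (∫ y, Real.exp (-‖t • y - x‖ ^ 2 / (2 * σ ^ 2)) ∂μ)
          ≤ ∫ _, Real.exp (-L ^ 2 / (2 * σ ^ 2)) ∂μ := by
        apply integral_mono_ae (hint t) (integrable_const _)
        filter_upwards [ae_K] with y hyK
        rw [Real.exp_le_exp]
        apply div_le_div_of_nonneg_right ?_ (by positivity)
        · rw [neg_le_neg_iff]
          apply pow_le_pow_left₀ hL0 ?_ 2
          apply max_le ?_ (norm_nonneg _)
          have heq : t • y - x = (y - x) - σ • y := by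
            rw [hσdef]; module
          have h2 : ‖y - x‖ - ‖σ • y‖ ≤ ‖t • y - x‖ := by
            rw [heq]; exact norm_sub_norm_le _ _
          have h3 : ‖σ • y‖ = σ * ‖y‖ := by
            rw [norm_smul, Real.norm_eq_abs, abs_of_pos hσ]
          have h4 : D ≤ ‖y - x‖ := by
            have : Metric.infDist x K ≤ dist x y := Metric.infDist_le_dist_of_mem hyK
            rw [hDdef]
            rwa [dist_eq_norm, norm_sub_rev] at this
          have h5 : σ * ‖y‖ ≤ σ * R :=
            mul_le_mul_of_nonneg_left (hRK y hyK) hσ.le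
          linarith [h2, h3 ▸ h2]
      calc _ ≤ _ := h1
        _ = Real.exp (-L ^ 2 / (2 * σ ^ 2)) := by simp
    have hlog : Real.log (∫ y, Real.exp (-‖t • y - x‖ ^ 2 / (2 * σ ^ 2)) ∂μ)
        ≤ -L ^ 2 / (2 * σ ^ 2) := by
      have := Real.log_le_log (hFpos t) hFle
      rwa [Real.log_exp] at this
    rw [hFdef t]
    have hkey : -2 * σ ^ 2 * (-L ^ 2 / (2 * σ ^ 2)) = L ^ 2 := by
      field_simp
    have h1 : -2 * σ ^ 2 * (-L ^ 2 / (2 * σ ^ 2)) ≤ -2 * σ ^ 2 *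
        Real.log (∫ y, Real.exp (-‖t • y - x‖ ^ 2 / (2 * σ ^ 2)) ∂μ) :=
      mul_le_mul_of_nonpos_left hlog (by nlinarith)
    rw [hkey] at h1
    linarith
  -- main argument
  rw [show (Metric.infDist x K) ^ 2 = D ^ 2 from rfl]
  rw [tendsto_order]
  constructor
  · -- lower
    intro b hb
    have hgc : Continuous (fun t : ℝ =>
        max (D - (1 - t) * R) 0 ^ 2 - (1 - t) * ‖x‖ ^ 2) := by fun_prop
    have hg : Tendsto (fun t : ℝ => max (D - (1 - t) * R) 0 ^ 2 - (1 - t) * ‖x‖ ^ 2)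
        (nhdsWithin 1 (Iio (1:ℝ))) (nhds (D ^ 2)) := by
      have := (hgc.tendsto 1).mono_left (nhdsWithin_le_nhds : nhdsWithin (1:ℝ) (Iio 1) ≤ nhds 1)
      simpa [max_eq_left hD0] using this
    filter_upwards [hg.eventually (eventually_gt_nhds hb), eventually_mem_nhdsWithin]
      with t h1 h2
    exact lt_of_lt_of_le h1 (hlow t h2)
  · -- upper
    intro b hb
    obtain ⟨δ, hδ0, hδb⟩ : ∃ δ > 0, (D + δ) ^ 2 < b := by
      refine ⟨min 1 ((b - D ^ 2) / (2 * D + 2)), ?_, ?_⟩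
      · apply lt_min one_pos
        apply div_pos (by linarith) (by linarith)
      · set δ := min 1 ((b - D ^ 2) / (2 * D + 2)) with hδdef
        have h1 : δ ≤ 1 := min_le_left _ _
        have h2 : δ * (2 * D + 2) ≤ b - D ^ 2 := by
          rw [← le_div_iff₀ (by linarith : (0:ℝ) < 2 * D + 2)]
          exact min_le_right _ _
        have h3 : 0 < δ := by
          apply lt_min one_pos
          apply div_pos (by linarith) (by linarith)
        nlinarith [sq_nonneg δ]
    set c : ℝ := (μ (Metric.ball y₀ δ)).toReal with hcdef
    have hc0 : 0 < c := by
      apply ENNReal.toReal_pos (hy₀K _ (Metric.ball_mem_nhds y₀ hδ0)).ne'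
        (measure_lt_top μ _).ne
    -- upper bound on homotopyObj
    have hupp : ∀ t : ℝ, t < 1 → homotopyObj μ t x ≤
        (D + δ + (1 - t) * (‖y₀‖ + δ)) ^ 2 - 2 * (1 - t) ^ 2 * Real.log c
          - (1 - t) * ‖x‖ ^ 2 := by
      intro t ht
      have hσ : 0 < 1 - t := by linarith
      set σ : ℝ := 1 - t with hσdef
      set M : ℝ := D + δ + σ * (‖y₀‖ + δ) with hMdef
      have hM0 : 0 ≤ M := by positivity
      have hFge : c * Real.exp (-M ^ 2 / (2 * σ ^ 2))
          ≤ ∫ y, Real.exp (-‖t • y - x‖ ^ 2 / (2 * σ ^ 2)) ∂μ := by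
        have hmono : ∀ y, (Metric.ball y₀ δ).indicator
            (fun _ => Real.exp (-M ^ 2 / (2 * σ ^ 2))) y
            ≤ Real.exp (-‖t • y - x‖ ^ 2 / (2 * σ ^ 2)) := by
          intro y
          by_cases hy : y ∈ Metric.ball y₀ δ
          · rw [indicator_of_mem hy, Real.exp_le_exp]
            apply div_le_div_of_nonneg_right ?_ (by positivity)
            rw [neg_le_neg_iff]
            apply pow_le_pow_left₀ (norm_nonneg _) ?_ 2
            have heq : t • y - x = (y - x) - σ • y := by rw [hσdef]; module
            have h2 : ‖t • y - x‖ ≤ ‖y - x‖ + ‖σ • y‖ := by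
              rw [heq]; exact norm_sub_le _ _
            have h3 : ‖σ • y‖ = σ * ‖y‖ := by
              rw [norm_smul, Real.norm_eq_abs, abs_of_pos hσ]
            have h4 : ‖y - x‖ ≤ ‖y - y₀‖ + ‖y₀ - x‖ := by
              have := norm_sub_le_norm_sub_add_norm_sub y y₀ x
              exact this
            have h5 : ‖y - y₀‖ < δ := by
              rw [Metric.mem_ball, dist_eq_norm] at hy; exact hy
            have h6 : ‖y‖ ≤ ‖y₀‖ + δ := by
              have := norm_sub_norm_le y y₀
              have h7 : ‖y - y₀‖ < δ := h5
              linarith [this]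
            have h8 : σ * ‖y‖ ≤ σ * (‖y₀‖ + δ) :=
              mul_le_mul_of_nonneg_left h6 hσ.le
            rw [hMdef]
            calc ‖t • y - x‖ ≤ ‖y - x‖ + ‖σ • y‖ := h2
              _ = ‖y - x‖ + σ * ‖y‖ := by rw [h3]
              _ ≤ (‖y - y₀‖ + ‖y₀ - x‖) + σ * (‖y₀‖ + δ) := by linarith
              _ ≤ D + δ + σ * (‖y₀‖ + δ) := by
                  rw [hy₀n] at *
                  linarith
          · rw [indicator_of_notMem hy]
            positivity
        have hiint : Integrable ((Metric.ball y₀ δ).indicator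
            (fun _ : EuclideanSpace ℝ (Fin d) => Real.exp (-M ^ 2 / (2 * σ ^ 2)))) μ :=
          (integrable_const _).indicator Metric.isOpen_ball.measurableSet
        have := integral_mono hiint (hint t) hmono
        rwa [integral_indicator_const _ Metric.isOpen_ball.measurableSet,
          smul_eq_mul] at this
      have hlog : Real.log c + (-M ^ 2 / (2 * σ ^ 2))
          ≤ Real.log (∫ y, Real.exp (-‖t • y - x‖ ^ 2 / (2 * σ ^ 2)) ∂μ) := by
        have h := Real.log_le_log (by positivity) hFge
        rwa [Real.log_mul hc0.ne' (Real.exp_pos _).ne', Real.log_exp] at h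
      rw [hFdef t]
      have hkey : -2 * σ ^ 2 * (-M ^ 2 / (2 * σ ^ 2)) = M ^ 2 := by field_simp
      have h1 : -2 * σ ^ 2 *
          Real.log (∫ y, Real.exp (-‖t • y - x‖ ^ 2 / (2 * σ ^ 2)) ∂μ)
          ≤ -2 * σ ^ 2 * (Real.log c + (-M ^ 2 / (2 * σ ^ 2))) :=
        mul_le_mul_of_nonpos_left hlog (by nlinarith)
      have h2 : -2 * σ ^ 2 * (Real.log c + (-M ^ 2 / (2 * σ ^ 2)))
          = M ^ 2 - 2 * σ ^ 2 * Real.log c := by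
        rw [mul_add, hkey]; ring
      rw [h2] at h1
      linarith
    have hhc : Continuous (fun t : ℝ =>
        (D + δ + (1 - t) * (‖y₀‖ + δ)) ^ 2 - 2 * (1 - t) ^ 2 * Real.log c
          - (1 - t) * ‖x‖ ^ 2) := by fun_prop
    have hh : Tendsto (fun t : ℝ =>
        (D + δ + (1 - t) * (‖y₀‖ + δ)) ^ 2 - 2 * (1 - t) ^ 2 * Real.log c
          - (1 - t) * ‖x‖ ^ 2) (nhdsWithin 1 (Iio (1:ℝ))) (nhds ((D + δ) ^ 2)) := by
      have := (hhc.tendsto 1).mono_left (nhdsWithin_le_nhds : nhdsWithin (1:ℝ) (Iio 1) ≤ nhds 1)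
      simpa using this
    filter_upwards [hh.eventually (eventually_lt_nhds hδb), eventually_mem_nhdsWithin]
      with t h1 h2
    exact lt_of_le_of_lt (hupp t h2) h1
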